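/- arXiv:2108.10725 — 2 statements merged into one kernel-verified Lean document; each statement's English description precedes it below -/
import Mathlib

section
/- Let σ be a Minkowski velocity and let ω, ξ ∈ ℝ⁴ satisfy ⟨ω,σ⟩ = 0, ⟨ξ,σ⟩ = 0, −c² < ⟨ω,ω⟩ ≤ 0, −c² < ⟨ξ,ξ⟩ ≤ 0 and ⟨ω,ξ⟩ < c². Put γ_ξ := 1/√(1 + ⟨ξ,ξ⟩/c²), γ_ω := 1/√(1 + ⟨ω,ω⟩/c²), ν := γ_ω·(ω + σ), ζ := γ_ξ·(ξ + σ), and μ := La(σ,ζ)ν. Then (c²/⟨μ,σ⟩)·μ − σ = [ω + ξ + (γ_ξ/(γ_ξ+1))·((⟨ξ,ξ⟩/c²)·ω − (⟨ω,ξ⟩/c²)·ξ)] / (1 − ⟨ω,ξ⟩/c²). (Oziewicz's theorem: the 4D composition of the ternary velocity ξ with the binary velocity ω has the form of Einstein's 3D velocity addition.) -/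
noncomputable section

/-- Minkowski bilinear form on ℝ⁴ with signature +−−−. -/
def mink (u v : Fin 4 → ℝ) : ℝ := u 0 * v 0 - u 1 * v 1 - u 2 * v 2 - u 3 * v 3

/-- Active covariant Lorentz boost determined by Minkowski velocities σ, ζ. -/
def La (c : ℝ) (σ ζ ν : Fin 4 → ℝ) : Fin 4 → ℝ :=
  ν - (mink ν (ζ + σ) / mink σ (ζ + σ)) • (ζ + σ) + (2 * mink ν σ / c ^ 2) • ζ

/-!
Split every vector along the observer σ. Since ω and ξ are σ-orthogonal, the boost
`La(σ, γ_ξ(ξ + σ))` sends `γ_ω(ω + σ)` to `γ_ω (u + t σ)` with `u ⊥ σ` an explicit combination of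
ω and ξ and `t = γ_ξ (1 - ⟨ω,ξ⟩/c²)`; the relative velocity of such a vector with respect to σ
is `u / t`. The remaining identity between the coefficients of ω reduces to
`γ_ξ² (1 + ⟨ξ,ξ⟩/c²) = 1`.
-/

lemma mink_comm (u v : Fin 4 → ℝ) : mink u v = mink v u := by
  simp only [mink]; ring

lemma mink_add_left (u v w : Fin 4 → ℝ) : mink (u + v) w = mink u w + mink v w := by
  simp only [mink, Pi.add_apply]; ring

lemma mink_add_right (u v w : Fin 4 → ℝ) : mink u (v + w) = mink u v + mink u w := by
  simp only [mink, Pi.add_apply]; ring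

lemma mink_smul_left (a : ℝ) (u v : Fin 4 → ℝ) : mink (a • u) v = a * mink u v := by
  simp only [mink, Pi.smul_apply, smul_eq_mul]; ring

lemma mink_smul_right (a : ℝ) (u v : Fin 4 → ℝ) : mink u (a • v) = a * mink u v := by
  simp only [mink, Pi.smul_apply, smul_eq_mul]; ring

lemma one_add_div_pos_of_neg_lt {x d : ℝ} (hd : 0 < d) (h : -d < x) : 0 < 1 + x / d := by
  rw [one_add_div hd.ne']
  exact div_pos (by linarith) hd

lemma one_div_sqrt_sq_mul {y : ℝ} (hy : 0 < y) : (1 / √y) ^ 2 * y = 1 := by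
  rw [div_pow, one_pow, Real.sq_sqrt hy.le, one_div_mul_cancel hy.ne']

section Boost

variable {c : ℝ} {σ : Fin 4 → ℝ}

lemma La_smul_add_smul_add {ω ξ : Fin 4 → ℝ} (hc : c ≠ 0) (hσ : mink σ σ = c ^ 2)
    (hωσ : mink ω σ = 0) (hξσ : mink ξ σ = 0) (a g : ℝ) (hg : g + 1 ≠ 0) :
    La c σ (g • (ξ + σ)) (a • (ω + σ)) =
      a • ((ω + (g * (1 - g * (mink ω ξ / c ^ 2) / (g + 1))) • ξ) +
        (g * (1 - mink ω ξ / c ^ 2)) • σ) := by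
  have hσξ : mink σ ξ = 0 := by rw [mink_comm, hξσ]
  have hσ_sum : mink σ (g • (ξ + σ) + σ) = (g + 1) * c ^ 2 := by
    rw [mink_add_right, mink_smul_right, mink_add_right, hσξ, hσ]; ring
  have hν_sum : mink (a • (ω + σ)) (g • (ξ + σ) + σ) = a * (g * mink ω ξ + (g + 1) * c ^ 2) := by
    simp only [mink_add_left, mink_add_right, mink_smul_left, mink_smul_right, hσξ, hσ, hωσ]
    ring
  have hνσ : mink (a • (ω + σ)) σ = a * c ^ 2 := by
    rw [mink_smul_left, mink_add_left, hωσ, hσ, zero_add]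
  rw [La, hσ_sum, hν_sum, hνσ]
  match_scalars <;> field_simp <;> ring

lemma div_mink_smul_sub_eq_inv_smul {u : Fin 4 → ℝ} (hc : c ≠ 0) (hσ : mink σ σ = c ^ 2)
    (huσ : mink u σ = 0) {a t : ℝ} (ha : a ≠ 0) (ht : t ≠ 0) :
    (c ^ 2 / mink (a • (u + t • σ)) σ) • a • (u + t • σ) - σ = t⁻¹ • u := by
  have hμσ : mink (a • (u + t • σ)) σ = a * t * c ^ 2 := by
    rw [mink_smul_left, mink_add_left, mink_smul_left, huσ, hσ]; ring
  rw [hμσ]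
  match_scalars
  · field_simp
  · field_simp
    ring

end Boost

lemma inv_smul_eq_einstein_form {V : Type*} [AddCommGroup V] [Module ℝ V] (ω ξ : V) {g b s : ℝ}
    (hg : g ^ 2 * (1 + b) = 1) (hg0 : g ≠ 0) (hg1 : g + 1 ≠ 0) (hs : 1 - s ≠ 0) :
    (g * (1 - s))⁻¹ • (ω + (g * (1 - g * s / (g + 1))) • ξ) =
      (1 - s)⁻¹ • (ω + ξ + (g / (g + 1)) • (b • ω - s • ξ)) := by
  match_scalars
  · field_simp
    linear_combination -hg
  · field_simp
    ring

theorem oziewicz_einstein_addition_general (c : ℝ) (hc : 0 < c) (σ : Fin 4 → ℝ)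
    (hσ : mink σ σ = c ^ 2) (ω ξ : Fin 4 → ℝ)
    (hωσ : mink ω σ = 0) (hξσ : mink ξ σ = 0)
    (hω1 : -c ^ 2 < mink ω ω)
    (hξ1 : -c ^ 2 < mink ξ ξ)
    (hωξ : mink ω ξ < c ^ 2)
    (γξ γω : ℝ)
    (hγξ : γξ = 1 / Real.sqrt (1 + mink ξ ξ / c ^ 2))
    (hγω : γω = 1 / Real.sqrt (1 + mink ω ω / c ^ 2))
    (ν ζ μ : Fin 4 → ℝ)
    (hν : ν = γω • (ω + σ)) (hζ : ζ = γξ • (ξ + σ))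
    (hμ : μ = La c σ ζ ν) :
    (c ^ 2 / mink μ σ) • μ - σ =
      (1 - mink ω ξ / c ^ 2)⁻¹ •
        (ω + ξ + (γξ / (γξ + 1)) •
          ((mink ξ ξ / c ^ 2) • ω - (mink ω ξ / c ^ 2) • ξ)) := by
  have hc2 : 0 < c ^ 2 := by positivity
  have hξ_pos := one_add_div_pos_of_neg_lt hc2 hξ1
  have hγξ_pos : 0 < γξ := by rw [hγξ]; positivity
  have hγω_pos : 0 < γω := by rw [hγω]; have := one_add_div_pos_of_neg_lt hc2 hω1; positivity
  have hs : 1 - mink ω ξ / c ^ 2 ≠ 0 := (sub_pos.2 ((div_lt_one hc2).2 hωξ)).ne'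
  have huσ : mink (ω + (γξ * (1 - γξ * (mink ω ξ / c ^ 2) / (γξ + 1))) • ξ) σ = 0 := by
    rw [mink_add_left, mink_smul_left, hωσ, hξσ]; ring
  rw [hμ, hν, hζ, La_smul_add_smul_add hc.ne' hσ hωσ hξσ γω γξ (by positivity),
    div_mink_smul_sub_eq_inv_smul hc.ne' hσ huσ hγω_pos.ne' (mul_ne_zero hγξ_pos.ne' hs)]
  exact inv_smul_eq_einstein_form ω ξ (hγξ ▸ one_div_sqrt_sq_mul hξ_pos) hγξ_pos.ne'
    (by positivity) hs

theorem oziewicz_einstein_addition (c : ℝ) (hc : 0 < c) (σ : Fin 4 → ℝ)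
    (hσ : mink σ σ = c ^ 2) (ω ξ : Fin 4 → ℝ)
    (hωσ : mink ω σ = 0) (hξσ : mink ξ σ = 0)
    (hω1 : -c ^ 2 < mink ω ω) (hω2 : mink ω ω ≤ 0)
    (hξ1 : -c ^ 2 < mink ξ ξ) (hξ2 : mink ξ ξ ≤ 0)
    (hωξ : mink ω ξ < c ^ 2)
    (γξ γω : ℝ)
    (hγξ : γξ = 1 / Real.sqrt (1 + mink ξ ξ / c ^ 2))
    (hγω : γω = 1 / Real.sqrt (1 + mink ω ω / c ^ 2))
    (ν ζ μ : Fin 4 → ℝ)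
    (hν : ν = γω • (ω + σ)) (hζ : ζ = γξ • (ξ + σ))
    (hμ : μ = La c σ ζ ν) :
    (c ^ 2 / mink μ σ) • μ - σ =
      (1 - mink ω ξ / c ^ 2)⁻¹ •
        (ω + ξ + (γξ / (γξ + 1)) •
          ((mink ξ ξ / c ^ 2) • ω - (mink ω ξ / c ^ 2) • ξ)) :=
  oziewicz_einstein_addition_general c hc σ hσ ω ξ hωσ hξσ hω1 hξ1 hωξ γξ γω hγξ hγω ν ζ μ hν hζ hμ
end
end

section
/- Let ν, μ be Minkowski velocities with ⟨ν,μ⟩ > 0. Then the invariant Lorentz–Oziewicz gamma factor of the canonical binary relative velocity satisfies ⟨ν,μ⟩/c² = 1/√(1 + ⟨ω(ν,μ),ω(ν,μ)⟩/c²), and consequently the second Minkowski velocity is recovered from the first and the binary velocity by μ = (ω(ν,μ) + ν)/√(1 + ⟨ω(ν,μ),ω(ν,μ)⟩/c²). -/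
noncomputable section

/-- Canonical (Oziewicz–Świerk–Bolós) binary relative velocity of μ with respect to ν. -/
def omegaBin (c : ℝ) (ν μ : Fin 4 → ℝ) : Fin 4 → ℝ := (c ^ 2 / mink ν μ) • μ - ν

/-! With `a = c² / ⟨ν,μ⟩` we have `ω(ν,μ) = a μ - ν`, and the normalisations of `ν` and `μ` give
`⟨ω,ω⟩ = a² c² - 2 a ⟨ν,μ⟩ + c² = a² c² - c²`. Hence `1 + ⟨ω,ω⟩/c² = a²`, so the gamma factor
`√(1 + ⟨ω,ω⟩/c²)` is `a` itself (as `a > 0`), and `μ = a⁻¹ (ω + ν)`. -/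

lemma mink_smul_sub_self (a : ℝ) (u v : Fin 4 → ℝ) :
    mink (a • u - v) (a • u - v) = a ^ 2 * mink u u - 2 * a * mink v u + mink v v := by
  simp only [mink, Pi.sub_apply, Pi.smul_apply, smul_eq_mul]
  ring

lemma omegaBin_add_self (c : ℝ) (ν μ : Fin 4 → ℝ) :
    omegaBin c ν μ + ν = (c ^ 2 / mink ν μ) • μ := by
  simp [omegaBin]

lemma mink_omegaBin_self {c : ℝ} {ν μ : Fin 4 → ℝ} (hν : mink ν ν = c ^ 2)
    (hμ : mink μ μ = c ^ 2) (hνμ : mink ν μ ≠ 0) :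
    mink (omegaBin c ν μ) (omegaBin c ν μ) = (c ^ 2 / mink ν μ) ^ 2 * c ^ 2 - c ^ 2 := by
  rw [omegaBin, mink_smul_sub_self, hμ, hν]
  field_simp
  ring

lemma one_add_mink_omegaBin_self_div {c : ℝ} (hc : c ≠ 0) {ν μ : Fin 4 → ℝ}
    (hν : mink ν ν = c ^ 2) (hμ : mink μ μ = c ^ 2) (hνμ : mink ν μ ≠ 0) :
    1 + mink (omegaBin c ν μ) (omegaBin c ν μ) / c ^ 2 = (c ^ 2 / mink ν μ) ^ 2 := by
  rw [mink_omegaBin_self hν hμ hνμ]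
  field_simp
  ring

lemma sqrt_one_add_mink_omegaBin_self_div {c : ℝ} (hc : c ≠ 0) {ν μ : Fin 4 → ℝ}
    (hν : mink ν ν = c ^ 2) (hμ : mink μ μ = c ^ 2) (hνμ : 0 < mink ν μ) :
    Real.sqrt (1 + mink (omegaBin c ν μ) (omegaBin c ν μ) / c ^ 2) = c ^ 2 / mink ν μ := by
  rw [one_add_mink_omegaBin_self_div hc hν hμ hνμ.ne', Real.sqrt_sq (by positivity)]

theorem gamma_factor_and_recovery (c : ℝ) (hc : 0 < c) (ν μ : Fin 4 → ℝ)
    (hν : mink ν ν = c ^ 2) (hμ : mink μ μ = c ^ 2) (hνμ : 0 < mink ν μ) :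
    mink ν μ / c ^ 2 =
        1 / Real.sqrt (1 + mink (omegaBin c ν μ) (omegaBin c ν μ) / c ^ 2) ∧
      μ = (Real.sqrt (1 + mink (omegaBin c ν μ) (omegaBin c ν μ) / c ^ 2))⁻¹ •
          (omegaBin c ν μ + ν) := by
  have hgamma := sqrt_one_add_mink_omegaBin_self_div hc.ne' hν hμ hνμ
  have hc2 : c ^ 2 ≠ 0 := by positivity
  rw [hgamma, omegaBin_add_self, smul_smul, inv_mul_cancel₀ (div_ne_zero hc2 hνμ.ne'), one_smul]
  exact ⟨by rw [one_div_div], rfl⟩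
end
end
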